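/- arXiv:2005.08117 — 2 statements merged into one kernel-verified Lean document; each statement's English description precedes it below -/
import Mathlib

section
/- Let a, b, c be effects on a finite-dimensional complex Hilbert space, with a and b sharp (orthogonal projections) and a + b ≤ I. Then (a+b)∘c = a∘c + b∘c if and only if a c b = 0. -/
open Matrix
open scoped Classical ComplexOrder

/-- The positive square root of a positive semidefinite matrix
(junk value `0` on non-positive-semidefinite matrices). -/
noncomputable def sqrtM {ι : Type*} [Fintype ι] [DecidableEq ι] (a : Matrix ι ι ℂ) :
    Matrix ι ι ℂ :=
  if h : a.PosSemidef then
    (h.1.eigenvectorUnitary : Matrix ι ι ℂ) * diagonal ((↑) ∘ (√·) ∘ h.1.eigenvalues) *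
      (star h.1.eigenvectorUnitary : Matrix ι ι ℂ)
  else 0

/-- The sequential product `a ∘ b = a^{1/2} b a^{1/2}` of effects. -/
noncomputable def seqProd {ι : Type*} [Fintype ι] [DecidableEq ι] (a b : Matrix ι ι ℂ) :
    Matrix ι ι ℂ :=
  sqrtM a * b * sqrtM a

/-- An effect: an operator `a` with `0 ≤ a ≤ I` in the Loewner order. -/
def IsEffect {ι : Type*} [Fintype ι] [DecidableEq ι] (a : Matrix ι ι ℂ) : Prop :=
  a.PosSemidef ∧ (1 - a).PosSemidef

lemma psd_neg_eq_zero {ι : Type*} [Fintype ι] [DecidableEq ι] {M : Matrix ι ι ℂ}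
    (h1 : M.PosSemidef) (h2 : (-M).PosSemidef) : M = 0 := by
  have h : ∀ x, M *ᵥ x = 0 := by
    intro x
    refine (h1.dotProduct_mulVec_zero_iff x).mp (le_antisymm ?_ (h1.dotProduct_mulVec_nonneg x))
    have := h2.dotProduct_mulVec_nonneg x
    rw [neg_mulVec, dotProduct_neg] at this
    exact neg_nonneg.mp this
  ext i j
  have := congrFun (h (Pi.single j 1)) i
  simpa using this

lemma sqrtM_of_proj {ι : Type*} [Fintype ι] [DecidableEq ι] {a : Matrix ι ι ℂ}
    (ha_herm : a.IsHermitian) (ha_idem : a * a = a) : sqrtM a = a := by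
  have hpsd : a.PosSemidef := by
    have : a = aᴴ * a := by rw [ha_herm]; exact ha_idem.symm
    rw [this]; exact posSemidef_conjTranspose_mul_self a
  rw [sqrtM, dif_pos hpsd]
  have hev : ∀ i, √(hpsd.1.eigenvalues i) = hpsd.1.eigenvalues i := by
    intro i
    have h1 := hpsd.1.mulVec_eigenvectorBasis i
    have h2 : a *ᵥ (a *ᵥ ⇑(hpsd.1.eigenvectorBasis i)) = a *ᵥ ⇑(hpsd.1.eigenvectorBasis i) := by
      rw [mulVec_mulVec, ha_idem]
    rw [h1, mulVec_smul, h1, smul_smul] at h2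
    have hv : (⇑(hpsd.1.eigenvectorBasis i) : ι → ℂ) ≠ 0 := by
      intro h0
      have hn := hpsd.1.eigenvectorBasis.orthonormal.1 i
      have h00 : hpsd.1.eigenvectorBasis i = 0 := PiLp.ext (fun j => congrFun h0 j)
      rw [h00, norm_zero] at hn
      exact zero_ne_one hn
    have h3 := sub_eq_zero.mpr h2
    rw [← sub_smul, smul_eq_zero] at h3
    rcases h3 with h3 | h3
    · have h4 : hpsd.1.eigenvalues i * (hpsd.1.eigenvalues i - 1) = 0 := by linarith
      rcases mul_eq_zero.mp h4 with h5 | h5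
      · rw [h5, Real.sqrt_zero]
      · rw [show hpsd.1.eigenvalues i = 1 by linarith, Real.sqrt_one]
    · exact absurd h3 hv
  have hfun : ((↑) ∘ (√·) ∘ hpsd.1.eigenvalues : ι → ℂ) = RCLike.ofReal ∘ hpsd.1.eigenvalues := by
    funext i
    simp only [Function.comp_apply, hev]
    rfl
  have hs := hpsd.1.spectral_theorem
  rw [Unitary.conjStarAlgAut_apply] at hs
  rw [hfun]
  exact hs.symm

/-- For sharp effects `a`, `b` with `a ⊥ b` and an effect `c`:
`(a+b)∘c = a∘c + b∘c` if and only if `a c b = 0`. -/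
theorem stmt_2 {ι : Type*} [Fintype ι] [DecidableEq ι] (a b c : Matrix ι ι ℂ)
    (ha_herm : a.IsHermitian) (ha_idem : a * a = a)
    (hb_herm : b.IsHermitian) (hb_idem : b * b = b)
    (hc : IsEffect c) (hab : (1 - (a + b)).PosSemidef) :
    seqProd (a + b) c = seqProd a c + seqProd b c ↔ a * c * b = 0 := by
  -- first show b * a = 0 and a * b = 0
  have haba : (-(a * b * a)).PosSemidef := by
    have := hab.conjTranspose_mul_mul_same a
    have e1 : a * a * a = a := by rw [ha_idem, ha_idem]
    have heq : aᴴ * (1 - (a + b)) * a = -(a * b * a) := by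
      rw [ha_herm]
      calc a * (1 - (a + b)) * a = a * a - a * a * a - a * b * a := by noncomm_ring
        _ = -(a * b * a) := by rw [e1, ha_idem]; noncomm_ring
    rwa [heq] at this
  have haba' : (a * b * a).PosSemidef := by
    have : a * b * a = (b * a)ᴴ * (b * a) := by
      rw [conjTranspose_mul, ha_herm, hb_herm]
      calc a * b * a = a * (b * b) * a := by rw [hb_idem]
        _ = a * b * (b * a) := by noncomm_ring
    rw [this]; exact posSemidef_conjTranspose_mul_self _
  have haba0 : a * b * a = 0 := psd_neg_eq_zero haba' haba
  have hba : b * a = 0 := by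
    rw [← conjTranspose_mul_self_eq_zero, conjTranspose_mul, ha_herm, hb_herm]
    calc a * b * (b * a) = a * (b * b) * a := by noncomm_ring
      _ = 0 := by rw [hb_idem, haba0]
  have hab0 : a * b = 0 := by
    have := congrArg conjTranspose hba
    rwa [conjTranspose_mul, ha_herm, hb_herm, conjTranspose_zero] at this
  -- square roots
  have hsa : sqrtM a = a := sqrtM_of_proj ha_herm ha_idem
  have hsb : sqrtM b = b := sqrtM_of_proj hb_herm hb_idem
  have hsab : sqrtM (a + b) = a + b := by
    refine sqrtM_of_proj (ha_herm.add hb_herm) ?_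
    rw [add_mul, mul_add, mul_add, ha_idem, hb_idem, hab0, hba, add_zero, zero_add]
  have hcherm : c.IsHermitian := hc.1.1
  rw [seqProd, seqProd, seqProd, hsa, hsb, hsab]
  constructor
  · intro h
    have key : a * c * b + b * c * a = 0 := by
      have expand : (a + b) * c * (a + b) =
          a * c * a + b * c * b + (a * c * b + b * c * a) := by noncomm_ring
      rw [expand] at h
      linear_combination (norm := noncomm_ring) h
    have : a * (a * c * b + b * c * a) * b = a * c * b := by
      rw [mul_add, add_mul]
      have h1 : a * (a * c * b) * b = a * c * b := by
        rw [show a * (a * c * b) * b = (a * a) * c * (b * b) by noncomm_ring, ha_idem, hb_idem]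
      have h2 : a * (b * c * a) * b = 0 := by
        rw [show a * (b * c * a) * b = (a * b) * c * (a * b) by noncomm_ring, hab0]
        simp
      rw [h1, h2, add_zero]
    rw [key] at this
    simpa using this.symm
  · intro h
    have hbca : b * c * a = 0 := by
      have := congrArg conjTranspose h
      rwa [conjTranspose_mul, conjTranspose_mul, ha_herm, hb_herm, hcherm,
        conjTranspose_zero, ← mul_assoc] at this
    have expand : (a + b) * c * (a + b) =
        a * c * a + b * c * b + (a * c * b + b * c * a) := by noncomm_ring
    rw [expand, h, hbca]
    simp
end

section
/- Let a, b be effects on a finite-dimensional complex Hilbert space. Then a∘b = b∘a if and only if ab = ba, i.e. the sequential product of two effects is symmetric exactly when the effects commute as operators. -/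
open Matrix
open scoped Classical ComplexOrder

/-!
Write `P = √a`, `Q = √b`. The identity `P b P = Q a Q` says `P Q Q P = Q P P Q`, i.e. that `P Q`
is normal. The nonzero spectrum of `P Q = √P (√P Q)` is that of the selfadjoint `√P Q √P`, so it
is real, and a normal element with real spectrum is selfadjoint: `P Q = (P Q)⋆ = Q P`. Hence `P`
and `Q` commute, and so do their squares `a` and `b`. The argument works in any C⋆-algebra.
-/

namespace CFC

variable {A : Type*} [CStarAlgebra A] [PartialOrder A] [StarOrderedRing A]

lemma quasispectrumRestricts_mul_of_nonneg {p q : A} (hp : 0 ≤ p) (hq : 0 ≤ q) :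
    QuasispectrumRestricts (p * q) Complex.reCLM := by
  have hsa : IsSelfAdjoint (sqrt p * q * sqrt p) :=
    hq.isSelfAdjoint.conjugate_self (sqrt_nonneg p).isSelfAdjoint
  rw [← sqrt_mul_sqrt_self p hp, mul_assoc]
  exact hsa.quasispectrumRestricts.mul_comm

lemma commute_of_isStarNormal_mul {p q : A} (hp : 0 ≤ p) (hq : 0 ≤ q)
    (h : IsStarNormal (p * q)) : Commute p q :=
  (hp.isSelfAdjoint.commute_iff hq.isSelfAdjoint).mpr <|
    isSelfAdjoint_iff_isStarNormal_and_quasispectrumRestricts.mpr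
      ⟨h, quasispectrumRestricts_mul_of_nonneg hp hq⟩

lemma commute_sqrt_left {a b : A} (h : Commute a b) : Commute (sqrt a) b := by
  rw [sqrt_eq_cfc]
  exact h.cfc_nnreal _

lemma sqrt_mul_mul_sqrt_of_commute {a b : A} (ha : 0 ≤ a) (h : Commute a b) :
    sqrt a * b * sqrt a = b * a := by
  rw [(commute_sqrt_left h).eq, mul_assoc, sqrt_mul_sqrt_self a ha]

theorem sqrt_mul_mul_sqrt_eq_iff_commute {a b : A} (ha : 0 ≤ a) (hb : 0 ≤ b) :
    sqrt a * b * sqrt a = sqrt b * a * sqrt b ↔ Commute a b := by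
  refine ⟨fun h ↦ ?_, fun h ↦ ?_⟩
  · have hP := sqrt_nonneg a
    have hQ := sqrt_nonneg b
    have hnormal : IsStarNormal (sqrt a * sqrt b) := by
      refine ⟨?_⟩
      rw [star_mul, hP.star_eq, hQ.star_eq, commute_iff_eq]
      calc sqrt b * sqrt a * (sqrt a * sqrt b) = sqrt b * (sqrt a * sqrt a) * sqrt b := by
            noncomm_ring
        _ = sqrt a * (sqrt b * sqrt b) * sqrt a := by
            rw [sqrt_mul_sqrt_self a ha, sqrt_mul_sqrt_self b hb, h]
        _ = sqrt a * sqrt b * (sqrt b * sqrt a) := by noncomm_ring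
    have hc := commute_of_isStarNormal_mul hP hQ hnormal
    rw [← sqrt_mul_sqrt_self a ha, ← sqrt_mul_sqrt_self b hb]
    exact (hc.mul_right hc).mul_left (hc.mul_right hc)
  · rw [sqrt_mul_mul_sqrt_of_commute ha h, sqrt_mul_mul_sqrt_of_commute hb h.symm, h.eq]

end CFC

section Matrix

open scoped MatrixOrder Matrix.Norms.L2Operator

variable {ι : Type*} [Fintype ι] [DecidableEq ι]

lemma sqrtM_eq_sqrt {a : Matrix ι ι ℂ} (ha : a.PosSemidef) : sqrtM a = CFC.sqrt a := by
  rw [CFC.sqrt_eq_real_sqrt a ha.nonneg, cfcₙ_eq_cfc, ha.1.cfc_eq, sqrtM, dif_pos ha]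
  rfl

lemma seqProd_eq_seqProd_iff_commute {a b : Matrix ι ι ℂ} (ha : a.PosSemidef)
    (hb : b.PosSemidef) : seqProd a b = seqProd b a ↔ Commute a b := by
  rw [seqProd, seqProd, sqrtM_eq_sqrt ha, sqrtM_eq_sqrt hb]
  exact CFC.sqrt_mul_mul_sqrt_eq_iff_commute ha.nonneg hb.nonneg

end Matrix

/-- For effects `a`, `b`: `a∘b = b∘a` if and only if `ab = ba`. -/
theorem stmt_3 {ι : Type*} [Fintype ι] [DecidableEq ι] (a b : Matrix ι ι ℂ)
    (ha : IsEffect a) (hb : IsEffect b) :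
    seqProd a b = seqProd b a ↔ a * b = b * a :=
  (seqProd_eq_seqProd_iff_commute ha.1 hb.1).trans (commute_iff_eq a b)
end
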